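/- Let P be the presented group defined in the context (arising from the 5-point quintic degeneration, Theorem 3.7). Then P is isomorphic to the symmetric group S_5. (Consequently, in the paper's setting, the fundamental group of the Galois cover of a surface with a 5-point quintic degeneration is trivial.) -/

import Mathlib

/-!
The involutions `g1, g2, g4, g5` satisfy the Coxeter relations of type `A₄` along the path
`g1 — g2 — g4 — g5`, and the conjugation relation, with `[g3,g4] = e` and `<g3,g5> = e`, turns into
`g3 = g5 g4 g2 g1 g2 g4 g5`; so `P` is generated by a type `A₄` family.

A group generated by involutions `t 0, …, t (n-1)` with the type `A` relations has at most
`(n+1)!` elements: every element is a product `c_n ⋯ c_1`, where `c_k` is one of the `k + 1` words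
`t i ⋯ t (k-1)` with `i ≤ k`, since this set of products is stable under left multiplication by
every `t j`. Sending `g1, …, g5` to `(1 2), (2 3), (1 5), (3 4), (4 5)` respects the relations and
hits all adjacent transpositions, so `P` maps onto `S₅` and, having at most `5!` elements, is
isomorphic to it.
-/

namespace Stmt11

/-- Generators: `i ↦ g(i+1)` for `i = 0,…,4`. -/
def g (i : Fin 5) : FreeGroup (Fin 5) := FreeGroup.of i

/-- The braid relator `x y x (y x y)⁻¹`, i.e. `<x,y> = e`. -/
def braid (x y : FreeGroup (Fin 5)) : FreeGroup (Fin 5) := x * y * x * (y * x * y)⁻¹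

/-- The commutator relator `x y x⁻¹ y⁻¹`, i.e. `[x,y] = e`. -/
def comm (x y : FreeGroup (Fin 5)) : FreeGroup (Fin 5) := x * y * x⁻¹ * y⁻¹

/-- Relators of the group `P` from Theorem 3.7 (the 5-point quintic degeneration). -/
def rels : Set (FreeGroup (Fin 5)) :=
  { (g 0) ^ 2, (g 1) ^ 2, (g 2) ^ 2, (g 3) ^ 2, (g 4) ^ 2,
    comm (g 0) (g 3), comm (g 0) (g 4), comm (g 1) (g 4), comm (g 2) (g 3),
    comm (g 3) ((g 1) ^ 2 * (g 4) ^ 2),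
    braid (g 0) (g 1), braid (g 1) (g 3), braid (g 2) (g 4), braid (g 3) (g 4),
    (g 1 * g 0 * (g 1)⁻¹) * ((g 2)⁻¹ * (g 3)⁻¹ * g 4 * g 3 * g 2)⁻¹,
    (g 4) ^ 2 * (g 3) ^ 2 * (g 2) ^ 2 * (g 1) ^ 2 * (g 0) ^ 2 }

/-- The presented group `P`. -/
abbrev P := PresentedGroup rels

end Stmt11

open Equiv Nat

section IcoProd

variable {M : Type*} [Monoid M] (t : ℕ → M)

def icoProd (i k : ℕ) : M := ((List.Ico i k).map t).prod

theorem icoProd_of_le {i k : ℕ} (h : k ≤ i) : icoProd t i k = 1 := by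
  simp [icoProd, List.Ico.eq_nil_of_le h]

theorem icoProd_eq_mul {i k : ℕ} (h : i < k) : icoProd t i k = t i * icoProd t (i + 1) k := by
  simp [icoProd, List.Ico.eq_cons h]

theorem icoProd_append {i j k : ℕ} (hij : i ≤ j) (hjk : j ≤ k) :
    icoProd t i k = icoProd t i j * icoProd t j k := by
  simp [icoProd, ← List.Ico.append_consecutive hij hjk]

variable {t} in
theorem commute_icoProd {a : M} {i k : ℕ} (h : ∀ m, i ≤ m → m < k → Commute a (t m)) :
    Commute a (icoProd t i k) :=
  Commute.list_prod_right _ _ <| by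
    simp only [List.mem_map, List.Ico.mem]
    rintro _ ⟨m, hm, rfl⟩
    exact h m hm.1 hm.2

end IcoProd

structure TypeARelations {G : Type*} [Group G] (t : ℕ → G) (n : ℕ) : Prop where
  mul_self : ∀ i < n, t i * t i = 1
  braid : ∀ i, i + 1 < n → t i * t (i + 1) * t i = t (i + 1) * t i * t (i + 1)
  commute : ∀ i j, i + 2 ≤ j → j < n → Commute (t i) (t j)

namespace TypeARelations

variable {G : Type*} [Group G] {t : ℕ → G} {n : ℕ}

theorem mul_icoProd (h : TypeARelations t n) {i j k : ℕ} (hij : i ≤ j) (hjk : j + 1 < k)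
    (hkn : k ≤ n) : t (j + 1) * icoProd t i k = icoProd t i k * t j := by
  have hsplit : icoProd t i k = icoProd t i j * (t j * (t (j + 1) * icoProd t (j + 2) k)) := by
    rw [icoProd_append t hij (by omega : j ≤ k), icoProd_eq_mul t (i := j) (by omega),
      icoProd_eq_mul t (i := j + 1) (by omega)]
  have hleft : Commute (t (j + 1)) (icoProd t i j) :=
    commute_icoProd fun m _ hm => (h.commute m (j + 1) (by omega) (by omega)).symm
  have hright : Commute (t j) (icoProd t (j + 2) k) :=
    commute_icoProd fun m hm _ => h.commute j m hm (by omega)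
  have hbraid : t (j + 1) * (t j * (t (j + 1) * icoProd t (j + 2) k)) =
      t j * (t (j + 1) * (t j * icoProd t (j + 2) k)) := by
    simp only [← mul_assoc, h.braid j (by omega)]
  rw [hsplit, hleft.left_comm, hbraid, hright.eq]
  simp only [mul_assoc]

section NormalForms

variable [DecidableEq G]

variable (t) in
def normalForms : ℕ → Finset G
  | 0 => {1}
  | k + 1 => Finset.image₂ (· * ·)
      ((Finset.range (k + 2)).image fun i => icoProd t i (k + 1)) (normalForms k)

theorem mem_normalForms_succ {k : ℕ} {x : G} :
    x ∈ normalForms t (k + 1) ↔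
      ∃ i ≤ k + 1, ∃ y ∈ normalForms t k, icoProd t i (k + 1) * y = x := by
  simp [normalForms, Finset.mem_image₂, Nat.lt_succ_iff]

theorem icoProd_mul_mem_normalForms {i k : ℕ} {y : G} (hi : i ≤ k + 1)
    (hy : y ∈ normalForms t k) : icoProd t i (k + 1) * y ∈ normalForms t (k + 1) :=
  mem_normalForms_succ.2 ⟨i, hi, y, hy, rfl⟩

theorem one_mem_normalForms (k : ℕ) : (1 : G) ∈ normalForms t k := by
  induction k with
  | zero => simp [normalForms]
  | succ k ih =>
    simpa [icoProd_of_le t le_rfl] using icoProd_mul_mem_normalForms (t := t) le_rfl ih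

theorem card_normalForms_le (k : ℕ) : (normalForms t k).card ≤ (k + 1)! := by
  induction k with
  | zero => simp [normalForms]
  | succ k ih =>
    calc (normalForms t (k + 1)).card
        ≤ ((Finset.range (k + 2)).image fun i => icoProd t i (k + 1)).card *
            (normalForms t k).card := Finset.card_image₂_le _ _ _
      _ ≤ (k + 2) * (k + 1)! := by
        gcongr
        exact Finset.card_image_le.trans (Finset.card_range _).le
      _ = (k + 2)! := (Nat.factorial_succ _).symm

theorem mul_mem_normalForms (h : TypeARelations t n) {k : ℕ} (hkn : k ≤ n) {j : ℕ}
    (hj : j < k) {x : G} (hx : x ∈ normalForms t k) : t j * x ∈ normalForms t k := by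
  induction k generalizing j x with
  | zero => omega
  | succ k ih =>
    obtain ⟨i, hi, y, hy, rfl⟩ := mem_normalForms_succ.1 hx
    -- `t j` commutes past `icoProd t i (k + 1)`, extends it, cancels its first letter, or
    -- passes through it as `t (j - 1)`.
    rcases lt_trichotomy (j + 1) i with hji | rfl | hij
    · rw [← mul_assoc, (commute_icoProd fun m hm _ => h.commute j m (by omega) (by omega)).eq,
        mul_assoc]
      exact icoProd_mul_mem_normalForms hi (ih (by omega) (by omega) hy)
    · rw [← mul_assoc, ← icoProd_eq_mul t (by omega)]
      exact icoProd_mul_mem_normalForms (by omega) hy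
    · obtain rfl | hij := (Nat.lt_succ_iff.1 hij).eq_or_lt
      · rw [← mul_assoc, icoProd_eq_mul t (by omega), ← mul_assoc, h.mul_self _ (by omega),
          one_mul]
        exact icoProd_mul_mem_normalForms (by omega) hy
      · obtain ⟨j', rfl⟩ : ∃ j', j = j' + 1 := ⟨j - 1, by omega⟩
        rw [← mul_assoc, h.mul_icoProd (by omega) (by omega) hkn, mul_assoc]
        exact icoProd_mul_mem_normalForms hi (ih (by omega) (by omega) hy)

theorem mem_normalForms (h : TypeARelations t n) (hgen : Subgroup.closure (t '' Set.Iio n) = ⊤)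
    (x : G) : x ∈ normalForms t n := by
  have hx : x ∈ Subgroup.closure (t '' Set.Iio n) := hgen ▸ Subgroup.mem_top x
  induction hx using Subgroup.closure_induction_left with
  | one => exact one_mem_normalForms n
  | mul_left _ hs _ _ ih =>
    obtain ⟨j, hj, rfl⟩ := hs
    exact h.mul_mem_normalForms le_rfl hj ih
  | inv_mul_cancel _ hs _ _ ih =>
    obtain ⟨j, hj, rfl⟩ := hs
    rw [inv_eq_of_mul_eq_one_right (h.mul_self j hj)]
    exact h.mul_mem_normalForms le_rfl hj ih

end NormalForms

theorem finite (h : TypeARelations t n) (hgen : Subgroup.closure (t '' Set.Iio n) = ⊤) :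
    Finite G := by
  classical
  exact Set.finite_univ_iff.1 <| (normalForms t n).finite_toSet.subset
    fun x _ => h.mem_normalForms hgen x

theorem natCard_le (h : TypeARelations t n) (hgen : Subgroup.closure (t '' Set.Iio n) = ⊤) :
    Nat.card G ≤ (n + 1)! := by
  classical
  calc Nat.card G ≤ Nat.card (normalForms t n) :=
        Nat.card_le_card_of_surjective (fun x => (x : G))
          fun x => ⟨⟨x, h.mem_normalForms hgen x⟩, rfl⟩
    _ = (normalForms t n).card := Nat.card_eq_finsetCard _
    _ ≤ (n + 1)! := card_normalForms_le n

theorem bijective_of_map_eq_swap (h : TypeARelations t n)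
    (hgen : Subgroup.closure (t '' Set.Iio n) = ⊤) (f : G →* Perm (Fin (n + 1)))
    (hf : ∀ i : Fin n, f (t i) = swap i.castSucc i.succ) : Function.Bijective f := by
  have := h.finite hgen
  have hsurj : Function.Surjective f := by
    refine MonoidHom.mrange_eq_top.1 (top_unique ?_)
    rw [← Perm.mclosure_swap_castSucc_succ, Submonoid.closure_le]
    rintro _ ⟨i, rfl⟩
    exact ⟨t i, hf i⟩
  refine hsurj.bijective_of_nat_card_le ?_
  rw [Nat.card_perm, Nat.card_fin]
  exact h.natCard_le hgen

end TypeARelations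

namespace Stmt11

open PresentedGroup

theorem mk_g (i : Fin 5) : mk rels (g i) = of i := rfl

theorem of_mul_self (i : Fin 5) : (of i : P) * of i = 1 := by
  have h : g i ^ 2 ∈ rels := by fin_cases i <;> simp [rels]
  simpa [pow_two, mk_g] using one_of_mem h

theorem of_inv (i : Fin 5) : (of i : P)⁻¹ = of i :=
  inv_eq_of_mul_eq_one_right (of_mul_self i)

theorem of_commute {i j : Fin 5} (h : comm (g i) (g j) ∈ rels) : Commute (of i : P) (of j) :=
  commutatorElement_eq_one_iff_commute.1 <| by
    simpa [comm, commutatorElement_def, mk_g] using one_of_mem h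

theorem of_braid {i j : Fin 5} (h : braid (g i) (g j) ∈ rels) :
    (of i : P) * of j * of i = of j * of i * of j := by
  simpa [mk_g] using mk_eq_mk_of_mul_inv_mem h

def chainGen : ℕ → P
  | 0 => of 0
  | 1 => of 1
  | 2 => of 3
  | _ => of 4

theorem typeARelations_chainGen : TypeARelations chainGen 4 where
  mul_self i _ := by
    unfold chainGen
    split <;> exact of_mul_self _
  braid i hi := by
    obtain rfl | rfl | rfl : i = 0 ∨ i = 1 ∨ i = 2 := by omega
    all_goals exact of_braid (by simp [rels])
  commute i j hij hj := by
    obtain ⟨rfl, rfl⟩ | ⟨rfl, rfl⟩ | ⟨rfl, rfl⟩ :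
        i = 0 ∧ j = 2 ∨ i = 0 ∧ j = 3 ∨ i = 1 ∧ j = 3 := by omega
    all_goals exact of_commute (by simp [rels])

theorem of_two_eq : (of 2 : P) = of 4 * of 3 * of 1 * of 0 * of 1 * of 3 * of 4 := by
  have hrel : (of 1 : P) * of 0 * of 1 = of 2 * of 3 * of 4 * of 3 * of 2 := by
    have h := mk_eq_mk_of_mul_inv_mem (rels := rels)
      (x := g 1 * g 0 * (g 1)⁻¹) (y := (g 2)⁻¹ * (g 3)⁻¹ * g 4 * g 3 * g 2) (by simp [rels])
    simpa [mk_g, of_inv] using h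
  have hcomm : (of 3 : P) * of 2 * of 3 = of 2 := by
    rw [mul_assoc, (of_commute (i := 2) (j := 3) (by simp [rels])).eq, ← mul_assoc,
      of_mul_self, one_mul]
  symm
  calc (of 4 * of 3 * of 1 * of 0 * of 1 * of 3 * of 4 : P)
      = of 4 * of 3 * (of 1 * of 0 * of 1) * of 3 * of 4 := by simp only [mul_assoc]
    _ = of 4 * (of 3 * of 2 * of 3) * of 4 * (of 3 * of 2 * of 3) * of 4 := by
        rw [hrel]
        simp only [mul_assoc]
    _ = of 4 * (of 2 * of 4 * of 2) * of 4 := by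
        rw [hcomm]
        simp only [mul_assoc]
    _ = of 4 * (of 4 * of 2 * of 4) * of 4 := by rw [of_braid (by simp [rels])]
    _ = of 2 := by
        simp only [← mul_assoc]
        rw [of_mul_self, one_mul, mul_assoc, of_mul_self, mul_one]

theorem closure_chainGen : Subgroup.closure (chainGen '' Set.Iio 4) = ⊤ := by
  have hmem : ∀ i < 4, chainGen i ∈ Subgroup.closure (chainGen '' Set.Iio 4) :=
    fun i hi => Subgroup.subset_closure ⟨i, hi, rfl⟩
  rw [eq_top_iff, ← closure_range_of rels, Subgroup.closure_le]
  rintro _ ⟨i, rfl⟩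
  fin_cases i
  · exact hmem 0 (by norm_num)
  · exact hmem 1 (by norm_num)
  · change (of 2 : P) ∈ _
    rw [show (of 2 : P) = chainGen 3 * chainGen 2 * chainGen 1 * chainGen 0 * chainGen 1 *
      chainGen 2 * chainGen 3 from of_two_eq]
    refine mul_mem (mul_mem (mul_mem (mul_mem (mul_mem (mul_mem ?_ ?_) ?_) ?_) ?_) ?_) ?_ <;>
      exact hmem _ (by norm_num)
  · exact hmem 2 (by norm_num)
  · exact hmem 3 (by norm_num)

def toPerm : P →* Perm (Fin 5) :=
  toGroup (f := ![swap 0 1, swap 1 2, swap 0 4, swap 2 3, swap 3 4]) <| by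
    rintro r (rfl | rfl | rfl | rfl | rfl | rfl | rfl | rfl | rfl | rfl | rfl | rfl | rfl | rfl |
      rfl | rfl) <;>
    · simp only [braid, comm, g, map_mul, map_inv, map_pow, FreeGroup.lift_apply_of]
      decide

/-- Theorem 3.7 (group-theoretic content): `P ≅ S₅`. -/
theorem P_iso_S5 : Nonempty (P ≃* Equiv.Perm (Fin 5)) :=
  ⟨.ofBijective toPerm <| typeARelations_chainGen.bijective_of_map_eq_swap closure_chainGen toPerm
    fun i => by fin_cases i <;> exact (toGroup.of _).trans (by decide)⟩

end Stmt11
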